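/- For every u > 0 and every real θ with −μu < θ and θ < Φ(u + θ/μ), ∫_0^∞ u e^{−ux} E(e^{θ(T_x − x/μ)} − 1) dx = (θ²/(μu + θ)²) · [ μu/(Φ(u + θ/μ) − θ) − 1 ]. -/

import Mathlib

open MeasureTheory ProbabilityTheory Filter Set Topology

noncomputable section

/-- The setup of the paper: a driftless Lévy subordinator `Xp` with Lévy measure `ν`
(finite mean `μ`), an independent initial delay `X0` with the stationary delay
distribution, and the associated inverse subordinators. -/
structure LevyCtx (Ω : Type) [MeasureSpace Ω] where
  ν : Measure ℝ
  μ : ℝ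
  Xp : ℝ → Ω → ℝ
  X0 : Ω → ℝ
  prob : IsProbabilityMeasure (ℙ : Measure Ω)
  nu_supp : ν (Set.Iic 0) = 0
  nu_min_fin : (∫⁻ x, ENNReal.ofReal (min 1 x) ∂ν) ≠ ⊤
  mu_pos : 0 < μ
  mu_eq : ∫⁻ x, ENNReal.ofReal x ∂ν = ENNReal.ofReal μ
  Xp_meas : ∀ t, Measurable (Xp t)
  X0_meas : Measurable X0
  Xp_zero : ∀ ω, Xp 0 ω = 0
  Xp_mono : ∀ᵐ ω : Ω, Monotone fun t => Xp t ω
  Xp_rc : ∀ᵐ ω : Ω, ∀ t : ℝ, ContinuousWithinAt (fun s => Xp s ω) (Set.Ici t) t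
  Xp_top : ∀ᵐ ω : Ω, Tendsto (fun t => Xp t ω) atTop atTop
  Xp_laplace : ∀ u : ℝ, 0 ≤ u → ∀ t : ℝ, 0 ≤ t →
    (∫ ω, Real.exp (-(u * Xp t ω))) = Real.exp (-(t * ∫ x, (1 - Real.exp (-(u * x))) ∂ν))
  Xp_stat : ∀ s t : ℝ, 0 ≤ s → s ≤ t →
    Measure.map (fun ω => Xp t ω - Xp s ω) ℙ = Measure.map (Xp (t - s)) ℙ
  Xp_indep : ∀ (n : ℕ) (t : Fin (n + 1) → ℝ), Monotone t → (∀ i, 0 ≤ t i) →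
    iIndepFun
      (fun (i : Fin n) (ω : Ω) => Xp (t i.succ) ω - Xp (t i.castSucc) ω) ℙ
  X0_pos : ∀ᵐ ω : Ω, 0 < X0 ω
  X0_cdf : ∀ x : ℝ, 0 ≤ x →
    (ℙ {ω | X0 ω ≤ x}).toReal = (1 / μ) * ∫ y in (0:ℝ)..x, (ν (Set.Ioi y)).toReal
  X0_indep : IndepFun X0 (fun ω (t : ℝ) => Xp t ω) ℙ

namespace LevyCtx

variable {Ω : Type} [MeasureSpace Ω] (S : LevyCtx Ω)

/-- The Laplace exponent `Φ(u) = ∫ (1 - e^{-ux}) ν(dx)`. -/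
def Phi (u : ℝ) : ℝ := ∫ x, (1 - Real.exp (-(u * x))) ∂S.ν

/-- The inverse (first passage) process of the delayed subordinator `X = X0 + Xp`. -/
def T (x : ℝ) (ω : Ω) : ℝ := sInf {t : ℝ | 0 ≤ t ∧ x < S.X0 ω + S.Xp t ω}

/-- The inverse (first passage) process of the pure subordinator `Xp`. -/
def Tp (x : ℝ) (ω : Ω) : ℝ := sInf {t : ℝ | 0 ≤ t ∧ x < S.Xp t ω}

/-- The overshoot process `Γ_x = X_{T_x} - x`. -/
def Gshoot (x : ℝ) (ω : Ω) : ℝ := S.X0 ω + S.Xp (S.T x ω) ω - x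

end LevyCtx

/-!
Write `α = u + θ / μ`. Off the single time `t = T_x`, `t < T_x` holds exactly when `X_t ≤ x`, so
`(e^{θ T_x} - 1) / θ = ∫_0^∞ e^{θ t} 1{X_t ≤ x} dt`. Integrating against `e^{-α x} dx` and using
Tonelli, the indicator becomes `e^{-α X_t} / α`, and by independence
`E e^{-α X_t} = E e^{-α X_0} · e^{-t Φ(α)} = Φ(α) / (μ α) · e^{-t Φ(α)}`, the first factor because
`X_0` has density `ν(y, ∞) / μ` (layer cake). The `t`-integral converges precisely because
`θ < Φ(α)`, and `e^{θ (T_x - x/μ)} - 1 = e^{-θ x / μ} (e^{θ T_x} - 1) + (e^{-θ x / μ} - 1)` reduces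
the theorem to this and two exponential integrals.
-/

open Real

lemma intervalIntegral_exp_mul {c : ℝ} (hc : c ≠ 0) (T : ℝ) :
    ∫ t in (0:ℝ)..T, exp (c * t) = (exp (c * T) - 1) / c := by
  rw [intervalIntegral.integral_comp_mul_left (fun y => exp y) hc, integral_exp]
  simp [div_eq_inv_mul]

lemma exp_mul_sub_one_div_nonneg {θ T : ℝ} (hθ : θ ≠ 0) (hT : 0 ≤ T) :
    0 ≤ (exp (θ * T) - 1) / θ :=
  intervalIntegral_exp_mul hθ T ▸ intervalIntegral.integral_nonneg hT fun _ _ => (exp_pos _).le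

lemma lintegral_exp_mul_Ioo {c : ℝ} (hc : c ≠ 0) {T : ℝ} (hT : 0 ≤ T) :
    ∫⁻ t in Ioo 0 T, ENNReal.ofReal (exp (c * t)) = ENNReal.ofReal ((exp (c * T) - 1) / c) := by
  rw [Measure.restrict_congr_set Ioo_ae_eq_Ioc, ← ofReal_integral_eq_lintegral_ofReal
    (by fun_prop : Continuous fun t => exp (c * t)).integrableOn_Ioc
    (.of_forall fun _ => (exp_pos _).le), ← intervalIntegral.integral_of_le hT,
    intervalIntegral_exp_mul hc]

lemma integrableOn_exp_neg_mul_Ioi {b : ℝ} (hb : 0 < b) (a : ℝ) :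
    IntegrableOn (fun x => exp (-(b * x))) (Ioi a) := by
  simpa only [neg_mul] using exp_neg_integrableOn_Ioi a hb

lemma integral_exp_neg_mul_Ioi_zero {b : ℝ} (hb : 0 < b) :
    ∫ x in Ioi 0, exp (-(b * x)) = 1 / b := by
  simpa [neg_mul] using integral_exp_mul_Ioi (neg_lt_zero.mpr hb) 0

lemma lintegral_exp_neg_mul_Ici {b : ℝ} (hb : 0 < b) (a : ℝ) :
    ∫⁻ x in Ici a, ENNReal.ofReal (exp (-(b * x))) = ENNReal.ofReal (exp (-(b * a)) / b) := by
  have h := integral_exp_mul_Ioi (neg_lt_zero.mpr hb) a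
  simp only [neg_mul, neg_div_neg_eq] at h
  rw [← Measure.restrict_congr_set Ioi_ae_eq_Ici, ← h]
  exact (ofReal_integral_eq_lintegral_ofReal
    (integrableOn_exp_neg_mul_Ioi hb a)
    (.of_forall fun _ => (exp_pos _).le)).symm

lemma le_ceil_mul_div (t : ℝ) (n : ℕ) : t ≤ ⌈t * (n + 1)⌉ / (n + 1) := by
  rw [le_div_iff₀ (by positivity)]
  exact Int.le_ceil _

lemma tendsto_ceil_mul_div (t : ℝ) :
    Tendsto (fun n : ℕ => (⌈t * (n + 1)⌉ / (n + 1) : ℝ)) atTop (𝓝 t) := by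
  have hup : ∀ n : ℕ, (⌈t * (n + 1)⌉ / (n + 1) : ℝ) ≤ t + 1 / (n + 1) := fun n => by
    rw [div_le_iff₀ (by positivity), add_mul, one_div_mul_cancel (by positivity)]
    exact (Int.ceil_lt_add_one _).le
  refine tendsto_of_tendsto_of_tendsto_of_le_of_le tendsto_const_nhds ?_ (le_ceil_mul_div t) hup
  simpa using tendsto_const_nhds.add (tendsto_one_div_add_atTop_nhds_zero_nat (𝕜 := ℝ))

lemma ciInf_comp_eq_of_tendsto {f : ℝ → ℝ} {t : ℝ} {r : ℕ → ℝ} (hf : Monotone f)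
    (hrc : ContinuousWithinAt f (Ici t) t) (hrt : ∀ n, t ≤ r n) (hr : Tendsto r atTop (𝓝 t)) :
    ⨅ n, f (r n) = f t := by
  have hr' : Tendsto r atTop (𝓝[≥] t) := tendsto_nhdsWithin_iff.mpr ⟨hr, .of_forall hrt⟩
  refine le_antisymm (ge_of_tendsto' (hrc.tendsto.comp hr') fun n => ?_)
    (le_ciInf fun n => hf (hrt n))
  exact ciInf_le ⟨f t, by rintro _ ⟨m, rfl⟩; exact hf (hrt m)⟩ n

/-- `Xp t` is only assumed measurable for each fixed `t`; reading it on countable grids to the right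
of `t` gives a version that is jointly measurable in `(t, ω)`, as Tonelli requires. -/
def rightGridInf {Ω : Type*} (X : ℝ → Ω → ℝ) (p : ℝ × Ω) : ℝ :=
  ⨅ n : ℕ, X (⌈p.1 * (n + 1)⌉ / (n + 1)) p.2

lemma measurable_rightGridInf {Ω : Type*} [MeasurableSpace Ω] {X : ℝ → Ω → ℝ}
    (hX : ∀ t, Measurable (X t)) : Measurable (rightGridInf X) := by
  refine Measurable.iInf fun n => ?_
  have hgrid : Measurable fun q : Ω × ℤ => X (q.2 / (n + 1)) q.1 :=
    measurable_from_prod_countable_left fun k => hX ((k : ℝ) / (n + 1))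
  exact hgrid.comp (measurable_snd.prodMk (measurable_fst.mul_const _).ceil)

lemma rightGridInf_eq {Ω : Type*} {X : ℝ → Ω → ℝ} {ω : Ω} (hmono : Monotone fun t => X t ω)
    {t : ℝ} (hrc : ContinuousWithinAt (fun s => X s ω) (Ici t) t) :
    rightGridInf X (t, ω) = X t ω :=
  ciInf_comp_eq_of_tendsto hmono hrc (le_ceil_mul_div t) (tendsto_ceil_mul_div t)

lemma le_iff_lt_sInf_of_monotone {f : ℝ → ℝ} (hf : Monotone f) {x : ℝ}
    (hne : {s | 0 ≤ s ∧ x < f s}.Nonempty) {t : ℝ} (ht : 0 ≤ t)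
    (hne_t : t ≠ sInf {s | 0 ≤ s ∧ x < f s}) :
    f t ≤ x ↔ t < sInf {s | 0 ≤ s ∧ x < f s} := by
  have hbdd : BddBelow {s | 0 ≤ s ∧ x < f s} := ⟨0, fun _ hs => hs.1⟩
  constructor
  · intro hle
    refine lt_of_le_of_ne (le_csInf hne fun s hs => ?_) hne_t
    by_contra! hst
    exact (hs.2.trans_le (hf hst.le)).not_ge hle
  · intro hlt
    by_contra! hgt
    exact (csInf_le hbdd ⟨ht, hgt⟩).not_gt hlt

lemma double_transform_identity {μ u θ Φ : ℝ} (hμ : μ ≠ 0) (hu : u ≠ 0) (hs : μ * u + θ ≠ 0)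
    (hΦ : Φ - θ ≠ 0) :
    θ * u * (Φ / (μ * (u + θ / μ) ^ 2 * (Φ - θ))) + (u * (1 / (u + θ / μ)) - u * (1 / u))
      = θ ^ 2 / (μ * u + θ) ^ 2 * (μ * u / (Φ - θ) - 1) := by
  rw [show u + θ / μ = (μ * u + θ) / μ by field_simp]
  obtain ⟨s, rfl⟩ : ∃ s, θ = s - μ * u := ⟨μ * u + θ, by ring⟩
  rw [add_sub_cancel] at hs ⊢
  field_simp
  ring

namespace LevyCtx

variable {Ω : Type} [MeasureSpace Ω] (S : LevyCtx Ω)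

lemma ae_pos_nu : ∀ᵐ x ∂S.ν, 0 < x :=
  ae_iff.mpr (by simp only [not_lt]; exact S.nu_supp)

lemma nu_Ioi_lt_top {y : ℝ} (hy : 0 < y) : S.ν (Ioi y) < ⊤ := by
  have hmin : 0 < min 1 y := lt_min one_pos hy
  have hle : ENNReal.ofReal (min 1 y) * S.ν (Ioi y) ≤ ∫⁻ x, ENNReal.ofReal (min 1 x) ∂S.ν :=
    calc ENNReal.ofReal (min 1 y) * S.ν (Ioi y)
        = ∫⁻ _ in Ioi y, ENNReal.ofReal (min 1 y) ∂S.ν := by rw [setLIntegral_const, mul_comm]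
      _ ≤ ∫⁻ x in Ioi y, ENNReal.ofReal (min 1 x) ∂S.ν :=
          setLIntegral_mono (by fun_prop) fun x hx =>
            ENNReal.ofReal_le_ofReal (min_le_min le_rfl (le_of_lt hx))
      _ ≤ ∫⁻ x, ENNReal.ofReal (min 1 x) ∂S.ν := setLIntegral_le_lintegral _ _
  refine lt_top_iff_ne_top.mpr fun htop => S.nu_min_fin (top_le_iff.mp ?_)
  rwa [htop, ENNReal.mul_top (by simpa using hmin)] at hle

lemma measurable_nu_Ioi : Measurable fun y => S.ν (Ioi y) :=
  Antitone.measurable fun _ _ hst => measure_mono (Ioi_subset_Ioi hst)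

lemma lintegral_nu_Ioi : ∫⁻ y in Ioi 0, S.ν (Ioi y) = ENNReal.ofReal S.μ := by
  rw [← S.mu_eq, lintegral_eq_lintegral_meas_lt S.ν
    (S.ae_pos_nu.mono fun _ hx => hx.le) aemeasurable_id]
  rfl

lemma integrable_one_sub_exp_neg_mul {β : ℝ} (hβ : 0 ≤ β) :
    Integrable (fun x => 1 - exp (-(β * x))) S.ν := by
  have hmin : Integrable (fun x : ℝ => min 1 x) S.ν := by
    refine ⟨by fun_prop, ?_⟩
    rw [hasFiniteIntegral_iff_ofReal (S.ae_pos_nu.mono fun x hx => le_min zero_le_one hx.le)]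
    exact lt_top_iff_ne_top.mpr S.nu_min_fin
  refine (hmin.const_mul (max 1 β)).mono' (by fun_prop) ?_
  filter_upwards [S.ae_pos_nu] with x hx
  have h1 : exp (-(β * x)) ≤ 1 := exp_le_one_iff.mpr (by nlinarith)
  have h2 : 1 - β * x ≤ exp (-(β * x)) := by linarith [add_one_le_exp (-(β * x))]
  rw [norm_of_nonneg (by linarith)]
  rcases le_total x 1 with hx1 | hx1
  · rw [min_eq_right hx1]; nlinarith [le_max_right 1 β]
  · rw [min_eq_left hx1]; nlinarith [le_max_left 1 β, exp_pos (-(β * x))]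

lemma one_sub_exp_neg_mul_nonneg {β : ℝ} (hβ : 0 ≤ β) :
    ∀ᵐ x ∂S.ν, 0 ≤ 1 - exp (-(β * x)) := by
  filter_upwards [S.ae_pos_nu] with x hx
  linarith [exp_le_one_iff.mpr (by nlinarith : -(β * x) ≤ 0)]

lemma Phi_nonneg {β : ℝ} (hβ : 0 ≤ β) : 0 ≤ S.Phi β :=
  integral_nonneg_of_ae (S.one_sub_exp_neg_mul_nonneg hβ)

lemma ofReal_Phi {β : ℝ} (hβ : 0 ≤ β) :
    ENNReal.ofReal (S.Phi β) = ∫⁻ x, ENNReal.ofReal (1 - exp (-(β * x))) ∂S.ν :=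
  ofReal_integral_eq_lintegral_ofReal (S.integrable_one_sub_exp_neg_mul hβ)
    (S.one_sub_exp_neg_mul_nonneg hβ)

lemma lintegral_nu_Ioi_mul_exp_neg {β : ℝ} (hβ : 0 < β) :
    ∫⁻ y in Ioi 0, S.ν (Ioi y) * ENNReal.ofReal (exp (-(β * y)))
      = ENNReal.ofReal (S.Phi β / β) := by
  have h := lintegral_comp_eq_lintegral_meas_lt_mul S.ν (S.ae_pos_nu.mono fun _ hx => hx.le)
    aemeasurable_id (g := fun t => exp (-(β * t)))
    (fun _ _ => (by fun_prop : Continuous fun t => exp (-(β * t))).intervalIntegrable _ _)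
    (.of_forall fun _ => (exp_pos _).le)
  have hint : ∀ z, ∫ t in (0:ℝ)..z, exp (-(β * t)) = (1 - exp (-(β * z))) * β⁻¹ := fun z => by
    have := intervalIntegral_exp_mul (neg_ne_zero.mpr hβ.ne') z
    simp only [neg_mul] at this
    rw [this]; field_simp; ring
  refine h.symm.trans ?_
  simp_rw [hint, ENNReal.ofReal_mul' (inv_nonneg.mpr hβ.le)]
  rw [lintegral_mul_const' _ _ ENNReal.ofReal_ne_top, ← S.ofReal_Phi hβ.le,
    ← ENNReal.ofReal_mul' (inv_nonneg.mpr hβ.le), div_eq_mul_inv]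

lemma setLIntegral_Ioc_nu_Ioi_ne_top (a : ℝ) : ∫⁻ y in Ioc 0 a, S.ν (Ioi y) ≠ ⊤ :=
  ne_top_of_le_ne_top (S.lintegral_nu_Ioi ▸ ENNReal.ofReal_ne_top)
    (lintegral_mono_set Ioc_subset_Ioi_self)

lemma measure_X0_le {a : ℝ} (ha : 0 < a) :
    ℙ {ω | S.X0 ω ≤ a} = (ENNReal.ofReal S.μ)⁻¹ * ∫⁻ y in Ioc 0 a, S.ν (Ioi y) := by
  have := S.prob
  have hcdf := S.X0_cdf a ha.le
  rw [intervalIntegral.integral_of_le ha.le, integral_toReal S.measurable_nu_Ioi.aemeasurable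
    ((ae_restrict_mem measurableSet_Ioc).mono fun y hy => S.nu_Ioi_lt_top hy.1)] at hcdf
  rw [← ENNReal.toReal_eq_toReal_iff' (measure_ne_top _ _) (ENNReal.mul_ne_top
    (ENNReal.inv_ne_top.mpr (by simp [S.mu_pos])) (S.setLIntegral_Ioc_nu_Ioi_ne_top a)), hcdf,
    ENNReal.toReal_mul, ENNReal.toReal_inv, ENNReal.toReal_ofReal S.mu_pos.le, one_div]

lemma map_X0_eq_withDensity : Measure.map S.X0 ℙ
    = (volume.restrict (Ioi 0)).withDensity fun y => (ENNReal.ofReal S.μ)⁻¹ * S.ν (Ioi y) := by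
  have := S.prob
  refine Measure.ext_of_Iic _ _ fun a => ?_
  rw [Measure.map_apply S.X0_meas measurableSet_Iic, withDensity_apply _ measurableSet_Iic,
    Measure.restrict_restrict measurableSet_Iic, lintegral_const_mul _ S.measurable_nu_Ioi]
  rcases le_or_gt a 0 with ha | ha
  · rw [Iic_inter_Ioi, Ioc_eq_empty (not_lt.mpr ha), Measure.restrict_empty, lintegral_zero_measure,
      mul_zero]
    exact measure_mono_null (fun ω (hω : S.X0 ω ≤ a) => not_lt.mpr (hω.trans ha))
      (ae_iff.mp S.X0_pos)
  · rw [Iic_inter_Ioi]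
    exact S.measure_X0_le ha

lemma lintegral_exp_neg_mul_X0 {β : ℝ} (hβ : 0 < β) :
    ∫⁻ ω, ENNReal.ofReal (exp (-(β * S.X0 ω))) = ENNReal.ofReal (S.Phi β / (S.μ * β)) := by
  rw [← lintegral_map (f := fun y => ENNReal.ofReal (exp (-(β * y)))) (by fun_prop) S.X0_meas,
    S.map_X0_eq_withDensity,
    lintegral_withDensity_eq_lintegral_mul _ (S.measurable_nu_Ioi.const_mul _) (by fun_prop)]
  simp only [Pi.mul_apply, mul_assoc]
  rw [lintegral_const_mul' _ _ (ENNReal.inv_ne_top.mpr (by simp [S.mu_pos])),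
    S.lintegral_nu_Ioi_mul_exp_neg hβ,
    ← ENNReal.ofReal_inv_of_pos S.mu_pos, ← ENNReal.ofReal_mul (inv_nonneg.mpr S.mu_pos.le)]
  congr 1
  field_simp

lemma ae_Xp_nonneg : ∀ᵐ ω, ∀ t, 0 ≤ t → 0 ≤ S.Xp t ω := by
  filter_upwards [S.Xp_mono] with ω hmono t ht
  simpa [S.Xp_zero ω] using hmono ht

lemma lintegral_exp_neg_mul_Xp {β : ℝ} (hβ : 0 ≤ β) {t : ℝ} (ht : 0 ≤ t) :
    ∫⁻ ω, ENNReal.ofReal (exp (-(β * S.Xp t ω))) = ENNReal.ofReal (exp (-(t * S.Phi β))) := by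
  have := S.prob
  have hle : ∀ᵐ ω, ‖exp (-(β * S.Xp t ω))‖ ≤ 1 := by
    filter_upwards [S.ae_Xp_nonneg] with ω hω
    rw [norm_of_nonneg (exp_pos _).le, exp_le_one_iff, neg_nonpos]
    exact mul_nonneg hβ (hω t ht)
  have hint : Integrable (fun ω => exp (-(β * S.Xp t ω))) :=
    (integrable_const 1).mono' (by have := S.Xp_meas t; fun_prop) hle
  rw [Phi, ← S.Xp_laplace β hβ t ht,
    ofReal_integral_eq_lintegral_ofReal hint (.of_forall fun _ => (exp_pos _).le)]

lemma lintegral_exp_neg_mul_X {β : ℝ} (hβ : 0 < β) {t : ℝ} (ht : 0 ≤ t) :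
    ∫⁻ ω, ENNReal.ofReal (exp (-(β * (S.X0 ω + S.Xp t ω))))
      = ENNReal.ofReal (S.Phi β / (S.μ * β) * exp (-(t * S.Phi β))) := by
  have hsplit : ∀ ω, ENNReal.ofReal (exp (-(β * (S.X0 ω + S.Xp t ω))))
      = ENNReal.ofReal (exp (-(β * S.X0 ω))) * ENNReal.ofReal (exp (-(β * S.Xp t ω))) := by
    intro ω
    rw [← ENNReal.ofReal_mul (exp_pos _).le, ← exp_add]
    ring_nf
  have hindep : IndepFun (fun ω => ENNReal.ofReal (exp (-(β * S.X0 ω))))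
      (fun ω => ENNReal.ofReal (exp (-(β * S.Xp t ω)))) :=
    S.X0_indep.comp (φ := fun x => ENNReal.ofReal (exp (-(β * x))))
      (ψ := fun f : ℝ → ℝ => ENNReal.ofReal (exp (-(β * f t)))) (by fun_prop) (by fun_prop)
  simp_rw [hsplit]
  rw [lintegral_mul_eq_lintegral_mul_lintegral_of_indepFun''
    (by have := S.X0_meas; fun_prop) (by have := S.Xp_meas t; fun_prop) hindep,
    S.lintegral_exp_neg_mul_X0 hβ, S.lintegral_exp_neg_mul_Xp hβ.le ht,
    ← ENNReal.ofReal_mul (div_nonneg (S.Phi_nonneg hβ.le) (mul_pos S.mu_pos hβ).le)]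

lemma ae_rightGridInf_Xp_eq : ∀ᵐ ω, ∀ t, rightGridInf S.Xp (t, ω) = S.Xp t ω := by
  filter_upwards [S.Xp_mono, S.Xp_rc] with ω hmono hrc t
  exact rightGridInf_eq hmono (hrc t)

lemma ae_T_nonneg_and_le_iff_lt_T : ∀ᵐ ω, ∀ x, 0 ≤ S.T x ω ∧
    ∀ t, 0 ≤ t → t ≠ S.T x ω → (S.X0 ω + S.Xp t ω ≤ x ↔ t < S.T x ω) := by
  filter_upwards [S.Xp_mono, S.Xp_top] with ω hmono htop x
  have hne : {s | 0 ≤ s ∧ x < S.X0 ω + S.Xp s ω}.Nonempty := by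
    obtain ⟨t, ht, h0⟩ := ((tendsto_atTop.mp htop (x - S.X0 ω + 1)).and
      (eventually_ge_atTop 0)).exists
    exact ⟨t, h0, by linarith⟩
  exact ⟨le_csInf hne fun _ hs => hs.1, fun t ht hne_t =>
    le_iff_lt_sInf_of_monotone (f := fun s => S.X0 ω + S.Xp s ω) (monotone_const.add hmono)
      hne ht hne_t⟩

def occupation (θ x : ℝ) (ω : Ω) : ENNReal :=
  ∫⁻ t in Ioi 0, if S.X0 ω + rightGridInf S.Xp (t, ω) ≤ x then ENNReal.ofReal (exp (θ * t)) else 0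

lemma measurable_occupation_integrand (θ : ℝ) : Measurable fun q : (ℝ × Ω) × ℝ =>
    if S.X0 q.1.2 + rightGridInf S.Xp (q.2, q.1.2) ≤ q.1.1
    then ENNReal.ofReal (exp (θ * q.2)) else 0 := by
  refine Measurable.ite (measurableSet_le ?_ (by fun_prop)) (by fun_prop) measurable_const
  exact (S.X0_meas.comp (by fun_prop)).add
    ((measurable_rightGridInf S.Xp_meas).comp (by fun_prop))

lemma measurable_occupation (θ : ℝ) : Measurable fun p : ℝ × Ω => S.occupation θ p.1 p.2 :=
  (S.measurable_occupation_integrand θ).lintegral_prod_right'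

lemma ae_occupation_eq {θ : ℝ} (hθ : θ ≠ 0) :
    ∀ᵐ ω, ∀ x, S.occupation θ x ω = ENNReal.ofReal ((exp (θ * S.T x ω) - 1) / θ) := by
  filter_upwards [S.ae_T_nonneg_and_le_iff_lt_T, S.ae_rightGridInf_Xp_eq] with ω hT hgrid x
  obtain ⟨hT0, hiff⟩ := hT x
  have hae : (fun t => if S.X0 ω + rightGridInf S.Xp (t, ω) ≤ x
      then ENNReal.ofReal (exp (θ * t)) else 0)
      =ᵐ[volume.restrict (Ioi 0)]
        (Ioo 0 (S.T x ω)).indicator fun t => ENNReal.ofReal (exp (θ * t)) := by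
    filter_upwards [ae_restrict_mem measurableSet_Ioi,
      ae_restrict_of_ae (ae_iff.mpr (by simp) : ∀ᵐ t : ℝ, t ≠ S.T x ω)]
      with t (ht : 0 < t) hne_t
    rw [hgrid t, indicator_apply]
    simp only [mem_Ioo, ht, true_and, hiff t ht.le hne_t]
  rw [occupation, lintegral_congr_ae hae, lintegral_indicator measurableSet_Ioo,
    Measure.restrict_restrict measurableSet_Ioo, inter_eq_left.mpr Ioo_subset_Ioi_self,
    lintegral_exp_mul_Ioo hθ hT0]

lemma lintegral_exp_neg_mul_occupation {α : ℝ} (hα : 0 < α) (θ : ℝ) {ω : Ω}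
    (hpos : ∀ t, 0 < t → 0 < S.X0 ω + rightGridInf S.Xp (t, ω)) :
    ∫⁻ x in Ioi 0, ENNReal.ofReal (exp (-(α * x))) * S.occupation θ x ω
      = ∫⁻ t in Ioi 0, ENNReal.ofReal (exp (θ * t) / α) *
          ENNReal.ofReal (exp (-(α * (S.X0 ω + rightGridInf S.Xp (t, ω))))) := by
  have hmeas : Measurable fun p : ℝ × ℝ =>
      if S.X0 ω + rightGridInf S.Xp (p.2, ω) ≤ p.1 then ENNReal.ofReal (exp (θ * p.2)) else 0 :=
    (S.measurable_occupation_integrand θ).comp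
      ((measurable_fst.prodMk measurable_const).prodMk measurable_snd)
  have hpull : ∀ x, ENNReal.ofReal (exp (-(α * x))) * S.occupation θ x ω
      = ∫⁻ t in Ioi 0, ENNReal.ofReal (exp (-(α * x))) *
          if S.X0 ω + rightGridInf S.Xp (t, ω) ≤ x then ENNReal.ofReal (exp (θ * t)) else 0 :=
    fun x => (lintegral_const_mul _ (hmeas.comp measurable_prodMk_left)).symm
  rw [lintegral_congr hpull, lintegral_lintegral_swap ((by fun_prop : Measurable fun p : ℝ × ℝ =>
    ENNReal.ofReal (exp (-(α * p.1)))).mul hmeas).aemeasurable]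
  refine setLIntegral_congr_fun measurableSet_Ioi fun t ht => ?_
  set c := S.X0 ω + rightGridInf S.Xp (t, ω)
  have hind : (fun x => ENNReal.ofReal (exp (-(α * x))) *
      if c ≤ x then ENNReal.ofReal (exp (θ * t)) else 0)
      = (Ici c).indicator
          fun x => ENNReal.ofReal (exp (θ * t)) * ENNReal.ofReal (exp (-(α * x))) := by
    ext x
    by_cases hx : c ≤ x <;> simp [hx, mul_comm]
  rw [hind, lintegral_indicator measurableSet_Ici, Measure.restrict_restrict measurableSet_Ici,
    inter_eq_left.mpr (Ici_subset_Ioi.mpr (hpos t ht)), lintegral_const_mul _ (by fun_prop),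
    lintegral_exp_neg_mul_Ici hα, ← ENNReal.ofReal_mul (exp_pos _).le,
    ← ENNReal.ofReal_mul (div_nonneg (exp_pos _).le hα.le)]
  congr 1
  ring

lemma ae_X0_add_rightGridInf_pos : ∀ᵐ ω, ∀ t, 0 < t → 0 < S.X0 ω + rightGridInf S.Xp (t, ω) := by
  filter_upwards [S.X0_pos, S.ae_Xp_nonneg, S.ae_rightGridInf_Xp_eq] with ω h0 hnn hgrid t ht
  rw [hgrid t]
  linarith [hnn t ht.le]

lemma lintegral_exp_neg_mul_X0_add_rightGridInf {α : ℝ} (hα : 0 < α) {t : ℝ} (ht : 0 ≤ t) :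
    ∫⁻ ω, ENNReal.ofReal (exp (-(α * (S.X0 ω + rightGridInf S.Xp (t, ω)))))
      = ENNReal.ofReal (S.Phi α / (S.μ * α) * exp (-(t * S.Phi α))) := by
  rw [← S.lintegral_exp_neg_mul_X hα ht]
  refine lintegral_congr_ae ?_
  filter_upwards [S.ae_rightGridInf_Xp_eq] with ω hgrid
  rw [hgrid t]

lemma lintegral_lintegral_exp_neg_mul_X0_add_rightGridInf {α : ℝ} (hα : 0 < α) (θ : ℝ) :
    ∫⁻ ω, ∫⁻ t in Ioi 0, ENNReal.ofReal (exp (θ * t) / α) *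
        ENNReal.ofReal (exp (-(α * (S.X0 ω + rightGridInf S.Xp (t, ω)))))
      = ∫⁻ t in Ioi 0, ENNReal.ofReal (S.Phi α / (S.μ * α ^ 2)) *
          ENNReal.ofReal (exp (-((S.Phi α - θ) * t))) := by
  have := S.prob
  have hΦ := S.Phi_nonneg hα.le
  have hμ := S.mu_pos
  have hX : Measurable fun p : Ω × ℝ => S.X0 p.1 + rightGridInf S.Xp (p.2, p.1) :=
    (S.X0_meas.comp measurable_fst).add ((measurable_rightGridInf S.Xp_meas).comp measurable_swap)
  rw [lintegral_lintegral_swap ((Measurable.ennreal_ofReal (by fun_prop)).mul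
    (measurable_exp.comp (hX.const_mul α).neg).ennreal_ofReal).aemeasurable]
  refine setLIntegral_congr_fun measurableSet_Ioi fun t ht => ?_
  rw [lintegral_const_mul' _ _ ENNReal.ofReal_ne_top,
    S.lintegral_exp_neg_mul_X0_add_rightGridInf hα (le_of_lt ht),
    ← ENNReal.ofReal_mul (by positivity), ← ENNReal.ofReal_mul (by positivity)]
  have hexp : exp (-((S.Phi α - θ) * t)) = exp (θ * t) * exp (-(t * S.Phi α)) := by
    rw [← exp_add]; ring_nf
  rw [hexp]
  congr 1
  field_simp

lemma lintegral_exp_neg_mul_lintegral_occupation {α θ : ℝ} (hα : 0 < α) (hθ : θ < S.Phi α) :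
    ∫⁻ x in Ioi 0, ENNReal.ofReal (exp (-(α * x))) * ∫⁻ ω, S.occupation θ x ω
      = ENNReal.ofReal (S.Phi α / (S.μ * α ^ 2 * (S.Phi α - θ))) := by
  have := S.prob
  have hΦ := S.Phi_nonneg hα.le
  have hμ := S.mu_pos
  have hmeas_occ := S.measurable_occupation θ
  have hpull : ∀ x, ENNReal.ofReal (exp (-(α * x))) * ∫⁻ ω, S.occupation θ x ω
      = ∫⁻ ω, ENNReal.ofReal (exp (-(α * x))) * S.occupation θ x ω :=
    fun x => (lintegral_const_mul _ (hmeas_occ.comp measurable_prodMk_left)).symm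
  calc ∫⁻ x in Ioi 0, ENNReal.ofReal (exp (-(α * x))) * ∫⁻ ω, S.occupation θ x ω
      = ∫⁻ ω, ∫⁻ x in Ioi 0, ENNReal.ofReal (exp (-(α * x))) * S.occupation θ x ω := by
        rw [lintegral_congr hpull]
        exact lintegral_lintegral_swap
          ((by fun_prop : Measurable fun p : ℝ × Ω => ENNReal.ofReal (exp (-(α * p.1)))).mul
            hmeas_occ).aemeasurable
    _ = ∫⁻ ω, ∫⁻ t in Ioi 0, ENNReal.ofReal (exp (θ * t) / α) *
          ENNReal.ofReal (exp (-(α * (S.X0 ω + rightGridInf S.Xp (t, ω))))) :=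
        lintegral_congr_ae (S.ae_X0_add_rightGridInf_pos.mono fun ω hpos =>
          S.lintegral_exp_neg_mul_occupation hα θ hpos)
    _ = ∫⁻ t in Ioi 0, ENNReal.ofReal (S.Phi α / (S.μ * α ^ 2)) *
          ENNReal.ofReal (exp (-((S.Phi α - θ) * t))) :=
        S.lintegral_lintegral_exp_neg_mul_X0_add_rightGridInf hα θ
    _ = ENNReal.ofReal (S.Phi α / (S.μ * α ^ 2 * (S.Phi α - θ))) := by
        rw [lintegral_const_mul _ (by fun_prop), Measure.restrict_congr_set Ioi_ae_eq_Ici,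
          lintegral_exp_neg_mul_Ici (sub_pos.mpr hθ), ← ENNReal.ofReal_mul (by positivity)]
        congr 1
        simp only [mul_zero, neg_zero, exp_zero]
        field_simp

lemma integral_exp_T_centered_sub_one {θ : ℝ} (hθ : θ ≠ 0) {x : ℝ}
    (hfin : ∫⁻ ω, S.occupation θ x ω ≠ ⊤) :
    ∫ ω, (exp (θ * (S.T x ω - x / S.μ)) - 1)
      = exp (-(θ * x / S.μ)) * θ * (∫⁻ ω, S.occupation θ x ω).toReal
          + (exp (-(θ * x / S.μ)) - 1) := by
  have := S.prob
  have hmeas : Measurable (S.occupation θ x) :=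
    (S.measurable_occupation θ).comp measurable_prodMk_left
  have hae : (fun ω => exp (θ * (S.T x ω - x / S.μ)) - 1)
      =ᵐ[ℙ] fun ω => exp (-(θ * x / S.μ)) * θ * (S.occupation θ x ω).toReal
          + (exp (-(θ * x / S.μ)) - 1) := by
    filter_upwards [S.ae_occupation_eq hθ, S.ae_T_nonneg_and_le_iff_lt_T] with ω hocc hT
    rw [hocc, ENNReal.toReal_ofReal (exp_mul_sub_one_div_nonneg hθ (hT x).1),
      mul_sub, sub_eq_add_neg (θ * S.T x ω), exp_add]
    field_simp
    ring
  rw [integral_congr_ae hae, integral_add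
    ((integrable_toReal_of_lintegral_ne_top hmeas.aemeasurable hfin).const_mul _)
    (integrable_const _), integral_const_mul, integral_toReal hmeas.aemeasurable
    (ae_lt_top hmeas hfin), integral_const, probReal_univ, one_smul]

lemma measurable_exp_neg_mul_lintegral_occupation (α θ : ℝ) :
    Measurable fun x => ENNReal.ofReal (exp (-(α * x))) * ∫⁻ ω, S.occupation θ x ω := by
  have := S.prob
  exact (by fun_prop : Measurable fun x : ℝ => ENNReal.ofReal (exp (-(α * x)))).mul
    (S.measurable_occupation θ).lintegral_prod_right'

lemma ae_lintegral_occupation_ne_top {α θ : ℝ} (hα : 0 < α) (hθ : θ < S.Phi α) :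
    ∀ᵐ x ∂volume.restrict (Ioi 0), ∫⁻ ω, S.occupation θ x ω ≠ ⊤ := by
  have hJ := (S.lintegral_exp_neg_mul_lintegral_occupation hα hθ).trans_ne ENNReal.ofReal_ne_top
  have hmeas := S.measurable_exp_neg_mul_lintegral_occupation α θ
  filter_upwards [ae_lt_top hmeas hJ] with x hx
  exact fun htop => by simp [htop, exp_pos] at hx

lemma integral_exp_neg_mul_toReal_lintegral_occupation {α θ : ℝ} (hα : 0 < α) (hθ : θ < S.Phi α) :
    IntegrableOn (fun x => exp (-(α * x)) * (∫⁻ ω, S.occupation θ x ω).toReal) (Ioi 0) ∧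
    ∫ x in Ioi 0, exp (-(α * x)) * (∫⁻ ω, S.occupation θ x ω).toReal
      = S.Phi α / (S.μ * α ^ 2 * (S.Phi α - θ)) := by
  have hμ := S.mu_pos
  have hΦ := S.Phi_nonneg hα.le
  have hmeas := S.measurable_exp_neg_mul_lintegral_occupation α θ
  have hJ := S.lintegral_exp_neg_mul_lintegral_occupation hα hθ
  have hfun : (fun x => exp (-(α * x)) * (∫⁻ ω, S.occupation θ x ω).toReal)
      = fun x => (ENNReal.ofReal (exp (-(α * x))) * ∫⁻ ω, S.occupation θ x ω).toReal := by
    ext x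
    rw [ENNReal.toReal_mul, ENNReal.toReal_ofReal (exp_pos _).le]
  rw [hfun]
  refine ⟨integrable_toReal_of_lintegral_ne_top hmeas.aemeasurable
    (hJ.trans_ne ENNReal.ofReal_ne_top), ?_⟩
  rw [integral_toReal hmeas.aemeasurable (ae_lt_top hmeas (hJ.trans_ne ENNReal.ofReal_ne_top)), hJ,
    ENNReal.toReal_ofReal (by have := sub_pos.mpr hθ; positivity)]

lemma integral_exp_neg_mul_integral_T_centered {u θ : ℝ} (hu : 0 < u) (hθ : θ ≠ 0)
    (hα : 0 < u + θ / S.μ) (hθu : θ < S.Phi (u + θ / S.μ)) :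
    ∫ x in Ioi 0, u * exp (-(u * x)) * ∫ ω, (exp (θ * (S.T x ω - x / S.μ)) - 1)
      = θ * u * (S.Phi (u + θ / S.μ) / (S.μ * (u + θ / S.μ) ^ 2 * (S.Phi (u + θ / S.μ) - θ)))
        + (u * (1 / (u + θ / S.μ)) - u * (1 / u)) := by
  obtain ⟨hint, hval⟩ := S.integral_exp_neg_mul_toReal_lintegral_occupation hα hθu
  have hae : ∀ᵐ x ∂volume.restrict (Ioi 0),
      u * exp (-(u * x)) * ∫ ω, (exp (θ * (S.T x ω - x / S.μ)) - 1)
        = θ * u * (exp (-((u + θ / S.μ) * x)) * (∫⁻ ω, S.occupation θ x ω).toReal)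
          + (u * exp (-((u + θ / S.μ) * x)) - u * exp (-(u * x))) := by
    filter_upwards [S.ae_lintegral_occupation_ne_top hα hθu] with x hx
    rw [S.integral_exp_T_centered_sub_one hθ hx,
      show -((u + θ / S.μ) * x) = -(u * x) + -(θ * x / S.μ) by ring, exp_add]
    ring
  have hα_int := (integrableOn_exp_neg_mul_Ioi hα 0).const_mul u
  have hu_int := (integrableOn_exp_neg_mul_Ioi hu 0).const_mul u
  have hdiff : Integrable (fun x => u * exp (-((u + θ / S.μ) * x)) - u * exp (-(u * x)))
      (volume.restrict (Ioi 0)) := hα_int.sub hu_int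
  rw [integral_congr_ae hae, integral_add (hint.const_mul _) hdiff,
    integral_const_mul, hval, integral_sub hα_int hu_int, integral_const_mul, integral_const_mul,
    integral_exp_neg_mul_Ioi_zero hα, integral_exp_neg_mul_Ioi_zero hu]

end LevyCtx

/-- Double transform of the centered first passage time of the delayed subordinator. -/
theorem double_transform_T_centered {Ω : Type} [MeasureSpace Ω] (S : LevyCtx Ω)
    (u θ : ℝ) (hu : 0 < u) (hθl : -(S.μ * u) < θ) (hθu : θ < S.Phi (u + θ / S.μ)) :
    (∫ x in Set.Ioi (0:ℝ), u * Real.exp (-(u * x)) *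
        ∫ ω, (Real.exp (θ * (S.T x ω - x / S.μ)) - 1))
      = (θ ^ 2 / (S.μ * u + θ) ^ 2) * (S.μ * u / (S.Phi (u + θ / S.μ) - θ) - 1) := by
  rcases eq_or_ne θ 0 with rfl | hθ
  · simp
  have hμ := S.mu_pos
  have hα : 0 < u + θ / S.μ := by
    have : -u < θ / S.μ := by rw [lt_div_iff₀ hμ]; linarith
    linarith
  rw [S.integral_exp_neg_mul_integral_T_centered hu hθ hα hθu]
  exact double_transform_identity hμ.ne' hu.ne' (by linarith) (sub_pos.mpr hθu).ne'
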